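/- arXiv:2501.08061 — 6 statements merged into one kernel-verified Lean document; each statement's English description precedes it below -/
import Mathlib

section
/- Let f : X → ℝ ∪ {±∞} be proper with c-conjugate f^c(x*, y*, α) = sup_{x∈X} { c(x,(x*,y*,α)) − f(x) }, where c(x,(x*,y*,α)) = ⟨x, x*⟩ if ⟨x, y*⟩ < α and +∞ otherwise. Then f^c(x*, y*, α) equals the Fenchel conjugate f*(x*) if dom f ⊆ {x : ⟨x, y*⟩ < α}, and equals +∞ otherwise. -/
noncomputable section
open Classical

/-- The space `W = X* × X* × ℝ` of the c-conjugation scheme. -/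
abbrev W (X : Type*) [AddCommGroup X] [Module ℝ X] [TopologicalSpace X] : Type _ :=
  (X →L[ℝ] ℝ) × (X →L[ℝ] ℝ) × ℝ

variable {X : Type*} [AddCommGroup X] [Module ℝ X] [TopologicalSpace X]

/-- The coupling function `c(x,(x*,y*,α)) = ⟨x,x*⟩` if `⟨x,y*⟩ < α`, `+∞` otherwise. -/
def cpl (x : X) (w : W X) : EReal :=
  if w.2.1 x < w.2.2 then ((w.1 x : ℝ) : EReal) else ⊤

/-- The c-conjugate `f^c(w) = sup_x { c(x,w) − f(x) }`. -/
def cConj (f : X → EReal) (w : W X) : EReal := ⨆ x : X, cpl x w - f x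

/-- The c'-conjugate `h^{c'}(x) = sup_w { c'(w,x) − h(w) }`. -/
def cpConj (h : W X → EReal) (x : X) : EReal := ⨆ w : W X, cpl x w - h w

/-- Subtraction with the DC convention `(+∞) − (+∞) = +∞`. -/
def dcSub (a b : EReal) : EReal := if a = ⊤ then ⊤ else a - b

/-- Indicator function `δ_A`. -/
def indic (A : Set X) (x : X) : EReal := if x ∈ A then (0 : EReal) else ⊤

/-- Epigraph of a function on `W`. -/
def epiW (h : W X → EReal) : Set (W X × ℝ) := {p | h p.1 ≤ (p.2 : EReal)}

/-- Effective domain. -/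
def domE {α : Type*} (f : α → EReal) : Set α := {x | f x ≠ ⊤}

/-- The inner expression of the Fenchel-type dual problems. -/
def dualExpr (f g : X → EReal) (A : Set X) (z w : W X) : EReal :=
  cConj g w - cConj f (w.1 - z.1, -z.2.1, z.2.2) - cConj (indic A) z

/-- The set `Z = X* × X* × ℝ_{++}`. -/
def Zset (X : Type*) [AddCommGroup X] [Module ℝ X] [TopologicalSpace X] : Set (W X) :=
  {z | 0 < z.2.2}

/-- Primal optimal value `v(P) = inf_X { f − g + δ_A }`. -/
def vP (f g : X → EReal) (A : Set X) : EReal := ⨅ x : X, dcSub (f x) (g x) + indic A x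

/-- Dual optimal value `v(D^F)`. -/
def vDF (f g : X → EReal) (A : Set X) : EReal :=
  ⨆ z ∈ Zset X, ⨅ w ∈ domE (cConj g), dualExpr f g A z w

/-- Dual optimal value `v(D̄^F)`. -/
def vDbarF (f g : X → EReal) (A : Set X) : EReal :=
  ⨅ w ∈ domE (cConj g), ⨆ z ∈ Zset X, dualExpr f g A z w

/-- The set `Ω`. -/
def OmegaSet (f g : X → EReal) (A : Set X) : Set (W X × ℝ) :=
  ⋃ z ∈ domE (cConj (indic A)), ⋂ w ∈ domE (cConj g),
    (fun p : W X × ℝ =>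
        p - ((w.1, 0, 0), (cConj g w).toReal - (cConj (indic A) z).toReal)) ''
      epiW (cConj (fun x => dcSub (f x) (cpl x (-z.1, -z.2.1, z.2.2))))

/-- The set `K`. -/
def Kset (f g : X → EReal) (A : Set X) : Set (W X × ℝ) :=
  ⋂ w ∈ domE (cConj g), ⋃ z ∈ domE (cConj (indic A)),
    (fun p : W X × ℝ =>
        p - ((w.1, 0, 0), (cConj g w).toReal - (cConj (indic A) z).toReal)) ''
      epiW (cConj (fun x => dcSub (f x) (cpl x (-z.1, -z.2.1, z.2.2))))

/-- The set `B = {(0,0)} × ℝ_{++} × ℝ`. -/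
def Bset (X : Type*) [AddCommGroup X] [Module ℝ X] [TopologicalSpace X] :
    Set (W X × ℝ) :=
  {p | p.1.1 = 0 ∧ p.1.2.1 = 0 ∧ 0 < p.1.2.2}

/-- Properness of an extended-real-valued function. -/
def ProperFn {α : Type*} (f : α → EReal) : Prop := (∀ x, f x ≠ ⊥) ∧ ∃ x, f x ≠ ⊤

/-- Convexity of an extended-real-valued function via its epigraph. -/
def ConvexFn (f : X → EReal) : Prop := Convex ℝ {p : X × ℝ | f p.1 ≤ (p.2 : EReal)}

/-- Evenly convex set. -/
def EvenlyConvexSet {Y : Type*} [AddCommGroup Y] [Module ℝ Y] [TopologicalSpace Y]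
    (C : Set Y) : Prop :=
  ∀ y0 ∉ C, ∃ φ : Y →L[ℝ] ℝ, ∀ y ∈ C, φ (y - y0) < 0

/-- Evenly convex function: its epigraph is an evenly convex subset of `X × ℝ`. -/
def EConvexFn (f : X → EReal) : Prop :=
  EvenlyConvexSet {p : X × ℝ | f p.1 ≤ (p.2 : EReal)}


/-- For proper `f`, the c-conjugate equals the Fenchel conjugate `f*(x*)` when
`dom f ⊆ {x : ⟨x,y*⟩ < α}`, and equals `+∞` otherwise. -/
theorem cConj_eq_fenchel_or_top
    {X : Type*} [AddCommGroup X] [Module ℝ X] [TopologicalSpace X]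
    (f : X → EReal) (hf : ProperFn f) (xs ys : X →L[ℝ] ℝ) (α : ℝ) :
    (domE f ⊆ {x | ys x < α} →
      cConj f (xs, ys, α) = ⨆ x : X, ((xs x : ℝ) : EReal) - f x) ∧
    (¬ domE f ⊆ {x | ys x < α} → cConj f (xs, ys, α) = ⊤) := by
  constructor
  · intro h
    unfold cConj
    congr 1
    funext x
    unfold cpl
    by_cases hx : ys x < α
    · simp [hx]
    · simp only [hx, if_false]
      have hfx : f x = ⊤ := by
        by_contra hne
        exact hx (h hne)
      rw [hfx, EReal.sub_top, EReal.sub_top]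
  · intro h
    obtain ⟨x, hx, hxa⟩ := Set.not_subset.mp h
    refine top_le_iff.mp (le_trans ?_ (le_iSup _ x))
    unfold cpl
    rw [if_neg (show ¬ ((xs,ys,α).2.1 x < (xs,ys,α).2.2) from hxa)]
    have hb := hf.1 x
    obtain ⟨r, hr⟩ : ∃ r : ℝ, f x = (r : EReal) :=
      ⟨(f x).toReal, (EReal.coe_toReal hx hb).symm⟩
    rw [hr, EReal.top_sub_coe]
end
end

section
/- Let f, g : X → ℝ ∪ {+∞} be proper convex functions with dom f ⊆ dom g, A ⊆ X nonempty and let (u*,v*,γ) ∈ dom g^c. Then (f − c(·,(u*,v*,γ)))^c(−x*,−y*,α) = f^c(u* − x*, −y*, α) for all x*, y* ∈ X*, α ∈ ℝ. -/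
noncomputable section
open Classical

variable {X : Type*} [AddCommGroup X] [Module ℝ X] [TopologicalSpace X]

/-- A point of `dom g` lies in the open half-space of every `w ∈ dom g^c`: otherwise
`c(x, w) = +∞` and `g^c(w) ≥ +∞ - g(x) = +∞`. -/
theorem lt_of_mem_domE_cConj {g : X → EReal} {x : X} {w : W X} (hx : x ∈ domE g)
    (hw : w ∈ domE (cConj g)) : w.2.1 x < w.2.2 := by
  by_contra hlt
  refine hw (top_le_iff.mp (le_trans ?_ (le_iSup (fun y => cpl y w - g y) x)))
  simp only [cpl, if_neg hlt]
  exact (EReal.top_sub hx).ge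

theorem cpl_of_lt {x : X} {w : W X} (h : w.2.1 x < w.2.2) : cpl x w = (w.1 x : EReal) :=
  if_pos h

theorem cpl_add_fst (x : X) (u : X →L[ℝ] ℝ) (w : W X) :
    cpl x (u + w.1, w.2) = cpl x w + (u x : EReal) := by
  unfold cpl
  split_ifs
  · simp only [add_apply, EReal.coe_add, add_comm]
  · exact (EReal.top_add_coe _).symm

theorem dcSub_coe (a : EReal) (r : ℝ) : dcSub a r = a - r := by
  by_cases ha : a = ⊤
  · simp only [dcSub, ha, if_true, EReal.top_sub_coe]
  · exact if_neg ha

theorem EReal.sub_sub_coe (a b : EReal) (r : ℝ) : a - (b - r) = a + r - b := by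
  induction a using EReal.rec <;> induction b using EReal.rec
  case coe.coe a b => norm_cast; ring
  case top.coe b => rw [← EReal.coe_sub, EReal.top_sub_coe, EReal.top_add_coe, EReal.top_sub_coe]
  all_goals simp [sub_eq_add_neg]

theorem cConj_sub_coupling_general
    {X : Type*} [AddCommGroup X] [Module ℝ X] [TopologicalSpace X]
    (f g : X → EReal)
    (hdom : domE f ⊆ domE g)
    (us vs : X →L[ℝ] ℝ) (γ : ℝ) (hw : (us, vs, γ) ∈ domE (cConj g))
    (xs ys : X →L[ℝ] ℝ) (α : ℝ) :
    cConj (fun x => dcSub (f x) (cpl x (us, vs, γ))) (-xs, -ys, α) =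
      cConj f (us - xs, -ys, α) := by
  refine iSup_congr fun x => ?_
  show cpl x (-xs, -ys, α) - dcSub (f x) (cpl x (us, vs, γ)) = _
  have hsub : dcSub (f x) (cpl x (us, vs, γ)) = f x - us x := by
    by_cases hfx : f x = ⊤
    · simp only [dcSub, hfx, if_true, EReal.top_sub_coe]
    · rw [cpl_of_lt (lt_of_mem_domE_cConj (hdom hfx) hw), dcSub_coe]
  rw [hsub, EReal.sub_sub_coe, sub_eq_add_neg us, ← cpl_add_fst]

/-- If `f, g` are proper convex, `dom f ⊆ dom g`, `A ≠ ∅` and `(u*,v*,γ) ∈ dom g^c`,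
then `(f − c(·,(u*,v*,γ)))^c(−x*,−y*,α) = f^c(u*−x*,−y*,α)`. -/
theorem cConj_sub_coupling
    {X : Type*} [AddCommGroup X] [Module ℝ X] [TopologicalSpace X]
    (f g : X → EReal) (A : Set X) (hA : A.Nonempty)
    (hf : ProperFn f) (hfc : ConvexFn f) (hg : ProperFn g) (hgc : ConvexFn g)
    (hdom : domE f ⊆ domE g)
    (us vs : X →L[ℝ] ℝ) (γ : ℝ) (hw : (us, vs, γ) ∈ domE (cConj g))
    (xs ys : X →L[ℝ] ℝ) (α : ℝ) :
    cConj (fun x => dcSub (f x) (cpl x (us, vs, γ))) (-xs, -ys, α) =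
      cConj f (us - xs, -ys, α) :=
  cConj_sub_coupling_general f g hdom us vs γ hw xs ys α
end
end

section
/- Let A = [0,∞) ⊆ ℝ, f(x) = x for x ≥ 0 and +∞ otherwise, and g(x) = 1 if x = 0, x if x > 0, +∞ otherwise. Then the primal value v(P) = inf_{x∈A} (f(x) − g(x)) equals −1, while the Fenchel dual value v(D^F) = sup_{(x*,y*,α)∈ℝ×ℝ×ℝ_{++}} inf_{(u*,v*,γ)∈dom g^c} { g^c(u*,v*,γ) − f^c(u*−x*,−y*,α) − δ_A^c(x*,y*,α) } is at least 0; in particular weak duality v(P) ≥ v(D^F) fails. -/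
noncomputable section
open Classical

variable {X : Type*} [AddCommGroup X] [Module ℝ X] [TopologicalSpace X]

/- ===== auxiliary material for Example 3.2 ===== -/

private lemma clm_apply' (φ : ℝ →L[ℝ] ℝ) (x : ℝ) : φ x = x * φ 1 := by
  simpa [smul_eq_mul] using φ.map_smul x (1:ℝ)

private lemma ereal_sub_zero (x : EReal) : x - 0 = x := by
  show x + (-0) = x
  rw [neg_zero, add_zero]

private lemma neg_one_coe : (-1:EReal) = ((-1:ℝ):EReal) := by
  rw [EReal.coe_neg, EReal.coe_one]

private def fE : ℝ → EReal := fun x => if 0 ≤ x then ((x : ℝ) : EReal) else ⊤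
private def gE : ℝ → EReal := fun x =>
  if x = 0 then (1 : EReal) else if 0 < x then ((x : ℝ) : EReal) else ⊤
private def AE : Set ℝ := Set.Ici (0 : ℝ)
private def z₀ : W ℝ := ((0 : ℝ →L[ℝ] ℝ), (0 : ℝ →L[ℝ] ℝ), (1:ℝ))

private lemma vP_eq : vP fE gE AE = (-1 : EReal) := by
  unfold vP
  apply le_antisymm
  · refine iInf_le_of_le 0 ?_
    have hf : fE 0 = 0 := by simp [fE]
    have hg : gE 0 = 1 := by simp [gE]
    have hA : indic AE 0 = 0 := by simp [indic, AE]
    rw [hf, hg, hA, add_zero]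
    unfold dcSub
    rw [if_neg (by norm_num : (0:EReal) ≠ ⊤)]
    norm_num
  · refine le_iInf fun x => ?_
    rcases lt_trichotomy x 0 with hx|hx|hx
    · have hf : fE x = ⊤ := by simp [fE, not_le.mpr hx]
      have hA : indic AE x = ⊤ := by simp [indic, AE, not_le.mpr hx]
      rw [hf, hA]
      unfold dcSub
      rw [if_pos rfl]
      simp
    · subst hx
      have hf : fE 0 = 0 := by simp [fE]
      have hg : gE 0 = 1 := by simp [gE]
      have hA : indic AE 0 = 0 := by simp [indic, AE]
      rw [hf, hg, hA, add_zero]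
      unfold dcSub
      rw [if_neg (by norm_num : (0:EReal) ≠ ⊤)]
      norm_num
    · have hf : fE x = ((x:ℝ):EReal) := by simp [fE, le_of_lt hx]
      have hg : gE x = ((x:ℝ):EReal) := by simp [gE, hx, hx.ne']
      have hA : indic AE x = 0 := by simp [indic, AE, le_of_lt hx]
      rw [hf, hg, hA, add_zero]
      unfold dcSub
      rw [if_neg (EReal.coe_ne_top x), ← EReal.coe_sub, sub_self]
      rw [neg_one_coe, EReal.coe_le_coe_iff]
      norm_num

private lemma indic_conj : cConj (indic AE) z₀ = 0 := by
  unfold cConj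
  apply le_antisymm
  · refine iSup_le fun x => ?_
    have hc : cpl x z₀ = 0 := by simp [cpl, z₀]
    rw [hc]
    by_cases hx : x ∈ AE
    · simp [indic, hx, ereal_sub_zero]
    · simp [indic, hx, EReal.sub_top]
  · refine le_iSup_of_le 0 ?_
    have hc : cpl (0:ℝ) z₀ = 0 := by simp [cpl, z₀]
    have hA : indic AE (0:ℝ) = 0 := by simp [indic, AE]
    rw [hc, hA, ereal_sub_zero]

private lemma fE_conj (φ : ℝ →L[ℝ] ℝ) (hφ : φ 1 ≤ 1) :
    cConj fE (φ, (0 : ℝ →L[ℝ] ℝ), (1:ℝ)) = 0 := by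
  unfold cConj
  apply le_antisymm
  · refine iSup_le fun x => ?_
    have hc : cpl x (φ, (0 : ℝ →L[ℝ] ℝ), (1:ℝ)) = ((φ x : ℝ) : EReal) := by
      simp [cpl]
    rw [hc]
    by_cases hx : 0 ≤ x
    · have hf : fE x = ((x:ℝ):EReal) := by simp [fE, hx]
      rw [hf, ← EReal.coe_sub]
      have h0 : φ x - x ≤ 0 := by nlinarith [clm_apply' φ x]
      exact_mod_cast h0
    · have hf : fE x = ⊤ := by simp [fE, hx]
      rw [hf, EReal.sub_top]
      exact bot_le
  · refine le_iSup_of_le 0 ?_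
    have hc : cpl (0:ℝ) (φ, (0 : ℝ →L[ℝ] ℝ), (1:ℝ)) = ((φ 0 : ℝ) : EReal) := by
      simp [cpl]
    have hf : fE 0 = 0 := by simp [fE]
    rw [hc, hf, map_zero, ereal_sub_zero]
    simp

private lemma g_key (w : W ℝ) (x : ℝ) : cpl x w - gE x ≤ cConj gE w := by
  unfold cConj
  exact le_iSup (fun x => cpl x w - gE x) x

private lemma g_beta {w : W ℝ} (hw : cConj gE w ≠ ⊤) : 0 < w.2.2 := by
  by_contra h
  apply hw
  refine top_le_iff.mp ?_
  have hk := g_key w 0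
  have hc : cpl (0:ℝ) w = ⊤ := by
    unfold cpl
    rw [if_neg]
    rw [map_zero]
    exact h
  have hg : gE 0 = 1 := by simp [gE]
  rw [hc, hg, show (1:EReal) = ((1:ℝ):EReal) from rfl, EReal.top_sub_coe] at hk
  exact hk

private lemma g_v {w : W ℝ} (hw : cConj gE w ≠ ⊤) : w.2.1 1 ≤ 0 := by
  by_contra h
  push_neg at h
  apply hw
  refine top_le_iff.mp ?_
  set x : ℝ := w.2.2 / w.2.1 1 with hxdef
  have hβ := g_beta hw
  have hxpos : 0 < x := div_pos hβ h
  have hk := g_key w x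
  have hc : cpl x w = ⊤ := by
    unfold cpl
    rw [if_neg]
    rw [clm_apply' w.2.1 x, hxdef, div_mul_cancel₀ _ (ne_of_gt h)]
    exact lt_irrefl _
  have hg : gE x = ((x:ℝ):EReal) := by simp [gE, hxpos, hxpos.ne']
  rw [hc, hg, EReal.top_sub_coe] at hk
  exact hk

private lemma g_term_pos {w : W ℝ} (hw : cConj gE w ≠ ⊤) {x : ℝ} (hx : 0 < x) :
    ((x * (w.1 1 - 1) : ℝ) : EReal) ≤ cConj gE w := by
  have hk := g_key w x
  have hc : cpl x w = ((w.1 x : ℝ) : EReal) := by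
    unfold cpl
    rw [if_pos]
    calc w.2.1 x = x * w.2.1 1 := clm_apply' _ _
      _ ≤ 0 := mul_nonpos_of_nonneg_of_nonpos (le_of_lt hx) (g_v hw)
      _ < w.2.2 := g_beta hw
  have hg : gE x = ((x:ℝ):EReal) := by simp [gE, hx, hx.ne']
  rw [hc, hg, ← EReal.coe_sub] at hk
  have hval : w.1 x - x = x * (w.1 1 - 1) := by rw [clm_apply' w.1 x]; ring
  rwa [hval] at hk

private lemma g_u {w : W ℝ} (hw : cConj gE w ≠ ⊤) : w.1 1 ≤ 1 := by
  by_contra h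
  push_neg at h
  obtain ⟨c, hc1, -⟩ := EReal.lt_iff_exists_real_btwn.mp (lt_top_iff_ne_top.mpr hw)
  set x : ℝ := (|c| + 1) / (w.1 1 - 1) with hxdef
  have hxpos : 0 < x := div_pos (by positivity) (by linarith)
  have h2 := lt_of_le_of_lt (g_term_pos hw hxpos) hc1
  rw [EReal.coe_lt_coe_iff] at h2
  rw [hxdef, div_mul_cancel₀ _ (by intro h0; rw [sub_eq_zero] at h0; linarith : w.1 1 - 1 ≠ 0)] at h2
  have := le_abs_self c
  linarith

private lemma g_nonneg {w : W ℝ} (hw : cConj gE w ≠ ⊤) : (0:EReal) ≤ cConj gE w := by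
  rcases eq_or_lt_of_le (g_u hw) with h1 | h1
  · have hk := g_term_pos hw (zero_lt_one)
    rw [show (1:ℝ) * (w.1 1 - 1) = 0 by rw [h1]; ring] at hk
    simpa using hk
  · by_contra h
    push_neg at h
    obtain ⟨c, hc1, hc2⟩ := EReal.lt_iff_exists_real_btwn.mp h
    have hcneg : c < 0 := by exact_mod_cast hc2
    have hd : w.1 1 - 1 < 0 := by linarith
    set x : ℝ := c / (2 * (w.1 1 - 1)) with hxdef
    have hxpos : 0 < x := div_pos_of_neg_of_neg hcneg (by linarith)
    have h2 := lt_of_le_of_lt (g_term_pos hw hxpos) hc1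
    rw [EReal.coe_lt_coe_iff] at h2
    have hx2 : x * (2 * (w.1 1 - 1)) = c :=
      div_mul_cancel₀ c (by intro h0; nlinarith : 2 * (w.1 1 - 1) ≠ 0)
    have he : 2 * (x * (w.1 1 - 1)) = c := by rw [← hx2]; ring
    linarith

private lemma vDF_ge : (0 : EReal) ≤ vDF fE gE AE := by
  unfold vDF
  have hz : z₀ ∈ Zset ℝ := by
    show (0:ℝ) < z₀.2.2
    norm_num [z₀]
  refine le_iSup₂_of_le z₀ hz ?_
  refine le_iInf₂ fun w hw => ?_
  have hw' : cConj gE w ≠ ⊤ := hw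
  unfold dualExpr
  have h1 : cConj fE (w.1 - z₀.1, -z₀.2.1, z₀.2.2) = 0 := by
    have e1 : w.1 - z₀.1 = w.1 := sub_zero _
    have e2 : -z₀.2.1 = (0 : ℝ →L[ℝ] ℝ) := neg_zero
    rw [e1, e2]
    exact fE_conj w.1 (g_u hw')
  rw [h1, indic_conj, ereal_sub_zero, ereal_sub_zero]
  exact g_nonneg hw'

/-- Example 3.2: with `A = [0,∞)`, `f(x) = x` on `[0,∞)` (`+∞` otherwise) and
`g(0) = 1`, `g(x) = x` for `x > 0` (`+∞` otherwise), the primal value is `−1`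
while the dual value `v(D^F)` is at least `0`; in particular weak duality fails. -/
theorem example_weak_duality_fails :
    let f : ℝ → EReal := fun x => if 0 ≤ x then ((x : ℝ) : EReal) else ⊤
    let g : ℝ → EReal := fun x =>
      if x = 0 then (1 : EReal) else if 0 < x then ((x : ℝ) : EReal) else ⊤
    let A : Set ℝ := Set.Ici (0 : ℝ)
    vP f g A = (-1 : EReal) ∧ (0 : EReal) ≤ vDF f g A ∧ vP f g A < vDF f g A := by
  intro f g A
  have h1 : vP f g A = (-1 : EReal) := vP_eq
  have h2 : (0 : EReal) ≤ vDF f g A := vDF_ge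
  refine ⟨h1, h2, ?_⟩
  rw [h1]
  refine lt_of_lt_of_le ?_ h2
  rw [neg_one_coe, show (0:EReal) = ((0:ℝ):EReal) from rfl, EReal.coe_lt_coe_iff]
  norm_num
end
end

section
/- Let f, g be proper convex on X, A ⊆ X nonempty, dom f ⊆ dom g, and β ∈ ℝ. Then there exists δ > 0 with (0,0,δ,β) ∈ epi (f − g + δ_A)^c if and only if inf_{x∈X} { f(x) − g(x) + δ_A(x) } ≥ −β. -/
noncomputable section
open Classical

variable {X : Type*} [AddCommGroup X] [Module ℝ X] [TopologicalSpace X]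

/-- Lemma 4.1(i): there exists `δ > 0` with `(0,0,δ,β) ∈ epi (f−g+δ_A)^c` iff
`inf_X { f − g + δ_A } ≥ −β`. -/
theorem lemma41_i
    {X : Type*} [AddCommGroup X] [Module ℝ X] [TopologicalSpace X]
    (f g : X → EReal) (A : Set X) (hA : A.Nonempty)
    (hf : ProperFn f) (hfc : ConvexFn f) (hg : ProperFn g) (hgc : ConvexFn g)
    (hdom : domE f ⊆ domE g) (β : ℝ) :
    (∃ δ : ℝ, 0 < δ ∧
        ((0, 0, δ), β) ∈ epiW (cConj (fun x => dcSub (f x) (g x) + indic A x))) ↔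
      ((-β : ℝ) : EReal) ≤ ⨅ x : X, (dcSub (f x) (g x) + indic A x) := by
  set h : X → EReal := fun x => dcSub (f x) (g x) + indic A x with hh
  have hbot : ∀ x, h x ≠ ⊥ := by
    intro x
    simp only [hh, dcSub, indic]
    split_ifs with h1 h2 h2
    · simp
    · simp
    all_goals {
      have hfg : f x - g x ≠ ⊥ := by
        have hgtop : g x ≠ ⊤ := hdom h1
        lift f x to ℝ using ⟨h1, hf.1 x⟩ with a
        lift g x to ℝ using ⟨hgtop, hg.1 x⟩ with b
        rw [← EReal.coe_sub]; exact EReal.coe_ne_bot _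
      intro hcon
      rcases EReal.add_eq_bot_iff.1 hcon with hc | hc
      · exact hfg hc
      · simp at hc }
  have key : ∀ δ : ℝ, 0 < δ →
      cConj h ((0, 0, δ) : W X) = ⨆ x : X, -(h x) := by
    intro δ hδ
    unfold cConj cpl
    refine iSup_congr fun x => ?_
    simp only [ContinuousLinearMap.zero_apply]
    rw [if_pos (by exact_mod_cast hδ)]
    rw [sub_eq_add_neg, EReal.coe_zero, zero_add]
  constructor
  · rintro ⟨δ, hδ, hmem⟩
    have : cConj h ((0, 0, δ) : W X) ≤ (β : EReal) := hmem
    rw [key δ hδ, iSup_le_iff] at this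
    refine le_iInf fun x => ?_
    have hx := this x
    rw [EReal.neg_le] at hx
    simpa [EReal.coe_neg] using hx
  · intro hle
    refine ⟨1, one_pos, ?_⟩
    show cConj h ((0, 0, (1:ℝ)) : W X) ≤ (β : EReal)
    rw [key 1 one_pos, iSup_le_iff]
    intro x
    have hx : ((-β : ℝ) : EReal) ≤ h x := le_trans hle (iInf_le _ x)
    rw [EReal.coe_neg] at hx
    exact EReal.neg_le.2 hx

end
end

section
/- With Ω = ⋃_{(x*,y*,α)∈dom δ_A^c} ⋂_{(u*,v*,γ)∈dom g^c} { epi (f − c(·,(−x*,−y*,α)))^c − (u*, 0, 0, g^c(u*,v*,γ) − δ_A^c(x*,y*,α)) }, one has: there exists δ > 0 with (0,0,δ,β) ∈ Ω if and only if there exists (x*,y*,α) ∈ dom δ_A^c such that for all (u*,v*,γ) ∈ dom g^c, g^c(u*,v*,γ) − f^c(u*−x*,−y*,α) − δ_A^c(x*,y*,α) ≥ −β. -/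
noncomputable section
open Classical

variable {X : Type*} [AddCommGroup X] [Module ℝ X] [TopologicalSpace X]

section Aux
variable {X : Type*} [AddCommGroup X] [Module ℝ X] [TopologicalSpace X]

lemma cpl_ne_bot (x : X) (w : W X) : cpl x w ≠ ⊥ := by
  unfold cpl; split <;> simp

lemma cConj_ne_bot {f : X → EReal} (hf : ∀ x, f x ≠ ⊥) (h2 : ∃ x, f x ≠ ⊤) (w : W X) :
    cConj f w ≠ ⊥ := by
  obtain ⟨x0, hx0⟩ := h2
  have hle : cpl x0 w - f x0 ≤ cConj f w := le_iSup (fun x => cpl x w - f x) x0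
  intro hb
  rw [hb, le_bot_iff] at hle
  have h1 : cpl x0 w ≠ ⊥ := cpl_ne_bot x0 w
  have h2 : -(f x0) ≠ ⊥ := by simpa using hx0
  rw [sub_eq_add_neg] at hle
  exact (EReal.add_eq_bot_iff.mp hle).elim h1 h2

lemma indic_proper {A : Set X} (hA : A.Nonempty) : ProperFn (indic A) := by
  refine ⟨fun x => ?_, ⟨hA.choose, by simp [indic, hA.choose_spec]⟩⟩
  unfold indic; split <;> simp

/-- Key identity: `(f − c(·,(−x*,−y*,α)))^c(u*,0,δ) = f^c(u*−x*,−y*,α)` for `δ > 0`. -/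
lemma conj_shift (f : X → EReal) (hf : ∀ x, f x ≠ ⊥) (z : W X) (u : X →L[ℝ] ℝ)
    (δ : ℝ) (hδ : 0 < δ) :
    cConj (fun x => dcSub (f x) (cpl x (-z.1, -z.2.1, z.2.2))) (u, 0, δ)
      = cConj f (u - z.1, -z.2.1, z.2.2) := by
  unfold cConj
  refine iSup_congr fun x => ?_
  have h1 : cpl x (u, 0, δ) = ((u x : ℝ) : EReal) := by simp [cpl, hδ]
  by_cases h : -(z.2.1 x) < z.2.2
  · have h2 : cpl x (-z.1, -z.2.1, z.2.2) = ((-(z.1 x) : ℝ) : EReal) := by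
      simp [cpl, h]
    have h3 : cpl x (u - z.1, -z.2.1, z.2.2) = ((u x - z.1 x : ℝ) : EReal) := by
      simp [cpl, h]
    simp only [h1, h2, h3]
    by_cases hfx : f x = ⊤
    · rw [hfx]; simp [dcSub]
    · obtain ⟨r, hr⟩ : ∃ r : ℝ, f x = (r : ℝ) := by
        lift f x to ℝ using ⟨hfx, hf x⟩ with r hr
        exact ⟨r, rfl⟩
      rw [hr]
      have : dcSub (r : EReal) ((-(z.1 x) : ℝ) : EReal) = ((r + z.1 x : ℝ) : EReal) := by
        simp only [dcSub, EReal.coe_ne_top, if_false]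
        rw [EReal.coe_neg, sub_eq_add_neg, neg_neg]
        exact (EReal.coe_add _ _).symm
      rw [this, ← EReal.coe_sub, ← EReal.coe_sub]
      norm_cast; ring
  · have h2 : cpl x (-z.1, -z.2.1, z.2.2) = ⊤ := by simp [cpl, h]
    have h3 : cpl x (u - z.1, -z.2.1, z.2.2) = ⊤ := by simp [cpl, h]
    simp only [h1, h2, h3]
    by_cases hfx : f x = ⊤
    · rw [hfx]; simp [dcSub]
    · obtain ⟨r, hr⟩ : ∃ r : ℝ, f x = (r : ℝ) := by
        lift f x to ℝ using ⟨hfx, hf x⟩ with r hr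
        exact ⟨r, rfl⟩
      rw [hr]
      have hd : dcSub (r : EReal) ⊤ = ⊥ := by simp [dcSub]
      rw [hd]
      have hl : ((u x : ℝ) : EReal) - ⊥ = ⊤ := by simp
      have hrr : (⊤ : EReal) - (r : EReal) = ⊤ := by
        rw [sub_eq_add_neg, EReal.top_add_of_ne_bot (by simp)]
      rw [hl, hrr]

lemma mem_sub_image {c q : W X × ℝ} {S : Set (W X × ℝ)} :
    q ∈ (fun p => p - c) '' S ↔ q + c ∈ S := by
  constructor
  · rintro ⟨p, hp, rfl⟩; rwa [sub_add_cancel]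
  · intro h; exact ⟨q + c, h, add_sub_cancel_right q c⟩

lemma ineq_iff (F : EReal) (Gr Dr β : ℝ) :
    F ≤ ((β + (Gr - Dr) : ℝ) : EReal) ↔
      ((-β : ℝ) : EReal) ≤ (Gr : EReal) - F - (Dr : EReal) := by
  induction F using EReal.rec with
  | bot =>
    have : (Gr : EReal) - ⊥ = ⊤ := by simp
    rw [this]
    have : (⊤ : EReal) - (Dr : EReal) = ⊤ := by
      rw [sub_eq_add_neg, EReal.top_add_of_ne_bot (by simp)]
    rw [this]
    exact iff_of_true bot_le le_top
  | coe r =>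
    rw [← EReal.coe_sub, ← EReal.coe_sub, EReal.coe_le_coe_iff, EReal.coe_le_coe_iff]
    constructor <;> intro hh <;> linarith
  | top =>
    have : (Gr : EReal) - ⊤ = ⊥ := by simp
    rw [this]
    have : (⊥ : EReal) - (Dr : EReal) = ⊥ := by simp [sub_eq_add_neg]
    rw [this]
    exact iff_of_false (EReal.coe_lt_top _).not_ge (EReal.bot_lt_coe _).not_ge

lemma core_iff (f g : X → EReal) (A : Set X) (hA : A.Nonempty)
    (hf : ProperFn f) (hg : ProperFn g)
    (z w : W X) (hz : z ∈ domE (cConj (indic A))) (hw : w ∈ domE (cConj g))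
    (δ β : ℝ) (hδ : 0 < δ) :
    ((((0, 0, δ), β) : W X × ℝ) ∈
      (fun p : W X × ℝ =>
        p - ((w.1, 0, 0), (cConj g w).toReal - (cConj (indic A) z).toReal)) ''
      epiW (cConj (fun x => dcSub (f x) (cpl x (-z.1, -z.2.1, z.2.2))))) ↔
    ((-β : ℝ) : EReal) ≤ dualExpr f g A z w := by
  have hGb : cConj g w ≠ ⊥ := cConj_ne_bot hg.1 hg.2 w
  have hDb : cConj (indic A) z ≠ ⊥ :=
    cConj_ne_bot (indic_proper hA).1 (indic_proper hA).2 z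
  set Gr := (cConj g w).toReal with hGr
  set Dr := (cConj (indic A) z).toReal with hDr
  have hG : cConj g w = (Gr : EReal) := (EReal.coe_toReal hw hGb).symm
  have hD : cConj (indic A) z = (Dr : EReal) := (EReal.coe_toReal hz hDb).symm
  rw [mem_sub_image]
  have hsum : ((((0, 0, δ), β) : W X × ℝ) + ((w.1, 0, 0), Gr - Dr))
      = (((w.1, 0, δ) : W X), β + (Gr - Dr)) := by
    simp [Prod.ext_iff]
  rw [hsum]
  show cConj (fun x => dcSub (f x) (cpl x (-z.1, -z.2.1, z.2.2))) (w.1, 0, δ)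
      ≤ ((β + (Gr - Dr) : ℝ) : EReal) ↔ _
  rw [conj_shift f hf.1 z w.1 δ hδ]
  rw [show (β + (Gr - Dr) : ℝ) = (β + (Gr - Dr) : ℝ) from rfl]
  rw [ineq_iff (cConj f (w.1 - z.1, -z.2.1, z.2.2)) Gr Dr β]
  unfold dualExpr
  rw [hG, hD]

end Aux

/-- Lemma 4.1(ii): `(0,0,δ,β) ∈ Ω` for some `δ > 0` iff there exists
`(x*,y*,α) ∈ dom δ_A^c` such that for all `(u*,v*,γ) ∈ dom g^c`,
`g^c(u*,v*,γ) − f^c(u*−x*,−y*,α) − δ_A^c(x*,y*,α) ≥ −β`. -/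
theorem lemma41_ii
    {X : Type*} [AddCommGroup X] [Module ℝ X] [TopologicalSpace X]
    (f g : X → EReal) (A : Set X) (hA : A.Nonempty)
    (hf : ProperFn f) (hfc : ConvexFn f) (hg : ProperFn g) (hgc : ConvexFn g)
    (hdom : domE f ⊆ domE g) (β : ℝ) :
    (∃ δ : ℝ, 0 < δ ∧ ((0, 0, δ), β) ∈ OmegaSet f g A) ↔
      ∃ z ∈ domE (cConj (indic A)), ∀ w ∈ domE (cConj g),
        ((-β : ℝ) : EReal) ≤ dualExpr f g A z w := by
  constructor
  · rintro ⟨δ, hδ, hmem⟩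
    rw [OmegaSet, Set.mem_iUnion₂] at hmem
    obtain ⟨z, hz, hz2⟩ := hmem
    refine ⟨z, hz, fun w hw => ?_⟩
    have hm := Set.mem_iInter₂.mp hz2 w hw
    exact (core_iff f g A hA hf hg z w hz hw δ β hδ).mp hm
  · rintro ⟨z, hz, hall⟩
    refine ⟨1, one_pos, ?_⟩
    rw [OmegaSet, Set.mem_iUnion₂]
    refine ⟨z, hz, Set.mem_iInter₂.mpr fun w hw => ?_⟩
    exact (core_iff f g A hA hf hg z w hz hw 1 β one_pos).mpr (hall w hw)
end
end

section
/- Weak duality v(P) ≥ v(D^F) holds if and only if Ω ∩ B ⊆ epi (f − g + δ_A)^c ∩ B, where B = {(0,0)} × ℝ_{++} × ℝ ⊆ W × ℝ. -/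
noncomputable section
open Classical

variable {X : Type*} [AddCommGroup X] [Module ℝ X] [TopologicalSpace X]

/-!
On the ray `B`, a point `((0, 0, α), r)` lies in `epi (f − g + δ_A)^c` iff `−r ≤ v(P)`, and it
lies in `Ω` iff `−r ≤ I(z)` for some `z ∈ dom δ_A^c`, where `I(z) = inf_{w ∈ dom g^c} dualExpr z w`
is the dual objective; `α` drops out because `c(x, (x*, 0, α)) = ⟨x, x*⟩` for `α > 0`. So the
inclusion says `I ≤ v(P)` on `dom δ_A^c`. As `I` increases with the last coordinate of `z`, and
off `dom δ_A^c` it is `−∞` (or `I ≡ +∞` when `dom g^c = ∅`), this is `I ≤ v(P)` on `Z`, that is,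
`v(D^F) ≤ v(P)`.
-/

lemma EReal.le_of_forall_coe_le_imp_coe_le {a b : EReal}
    (h : ∀ r : ℝ, (r : EReal) ≤ a → (r : EReal) ≤ b) : a ≤ b := by
  by_contra! hba
  obtain ⟨r, hbr, hra⟩ := EReal.exists_between_coe_real hba
  exact (h r hra.le).not_gt hbr

lemma le_coe_add_sub_iff {F : EReal} (hF : F ≠ ⊥) (r c d : ℝ) :
    F ≤ ((r + (c - d) : ℝ) : EReal) ↔ ((-r : ℝ) : EReal) ≤ (c : EReal) - F - (d : EReal) := by
  induction F using EReal.rec with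
  | bot => exact absurd rfl hF
  | top =>
    simp only [EReal.sub_top, EReal.bot_sub, top_le_iff, le_bot_iff, EReal.coe_ne_top,
      EReal.coe_ne_bot]
  | coe F =>
    rw [← EReal.coe_sub, ← EReal.coe_sub, EReal.coe_le_coe_iff, EReal.coe_le_coe_iff]
    constructor <;> intro <;> linarith

lemma domE_indic {Y : Type*} (A : Set Y) : domE (indic A) = A := by
  ext x; by_cases hx : x ∈ A <;> simp [domE, indic, hx]

lemma coe_le_cpl (x : X) (w : W X) : ((w.1 x : ℝ) : EReal) ≤ cpl x w := by
  unfold cpl; split_ifs <;> simp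

lemma cpl_of_snd_eq_zero (x : X) (a : X →L[ℝ] ℝ) {α : ℝ} (hα : 0 < α) :
    cpl x (a, 0, α) = a x := by
  simp [cpl, hα]

lemma cpl_le_cpl_of_le (x : X) (a b : X →L[ℝ] ℝ) {α β : ℝ} (hαβ : α ≤ β) :
    cpl x (a, b, β) ≤ cpl x (a, b, α) := by
  unfold cpl
  split_ifs with hβ hα hα
  · exact le_rfl
  · exact le_top
  · exact absurd (hα.trans_le hαβ) hβ
  · exact le_rfl

lemma cConj_le_cConj_of_le (h : X → EReal) (a b : X →L[ℝ] ℝ) {α β : ℝ} (hαβ : α ≤ β) :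
    cConj h (a, b, β) ≤ cConj h (a, b, α) :=
  iSup_mono fun x => EReal.sub_le_sub (cpl_le_cpl_of_le x a b hαβ) le_rfl

lemma cConj_ne_bot_s13 {h : X → EReal} (hh : (domE h).Nonempty) (w : W X) : cConj h w ≠ ⊥ := by
  obtain ⟨x, hx⟩ := hh
  refine ne_bot_of_le_ne_bot ?_ <|
    (EReal.sub_le_sub (coe_le_cpl x w) le_rfl).trans (le_iSup (fun x => cpl x w - h x) x)
  change h x ≠ ⊤ at hx
  generalize h x = e at hx ⊢
  induction e using EReal.rec <;> simp_all [← EReal.coe_sub]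

lemma coe_toReal_cConj {h : X → EReal} (hh : (domE h).Nonempty) {w : W X}
    (hw : w ∈ domE (cConj h)) : ((cConj h w).toReal : EReal) = cConj h w :=
  EReal.coe_toReal hw (cConj_ne_bot_s13 hh w)

lemma mem_epiW_cConj_iff_of_mem_Bset (h : X → EReal) {p : W X × ℝ} (hp : p ∈ Bset X) :
    p ∈ epiW (cConj h) ↔ ((-p.2 : ℝ) : EReal) ≤ ⨅ x, h x := by
  obtain ⟨⟨a, b, α⟩, r⟩ := p
  obtain ⟨rfl, rfl, hα⟩ := hp
  simp only [epiW, cConj, Set.mem_ofPred_eq, cpl_of_snd_eq_zero _ _ hα, iSup_le_iff, le_iInf_iff,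
    zero_apply, EReal.coe_zero, zero_sub, EReal.coe_neg]
  exact forall_congr' fun x => EReal.neg_le

lemma cConj_dcSub_cpl_neg (f : X → EReal) (z : W X) (a : X →L[ℝ] ℝ) {β : ℝ} (hβ : 0 < β) :
    cConj (fun x => dcSub (f x) (cpl x (-z.1, -z.2.1, z.2.2))) (a, 0, β)
      = cConj f (a - z.1, -z.2.1, z.2.2) := by
  refine iSup_congr fun x => ?_
  rw [cpl_of_snd_eq_zero x a hβ]
  unfold cpl dcSub
  simp only [neg_apply, sub_apply]
  generalize f x = e
  split_ifs <;> induction e using EReal.rec <;> simp_all [← EReal.coe_sub]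
  norm_cast
  ring

lemma zero_zero_one_mem_domE_cConj_indic (A : Set X) :
    ((0, 0, 1) : W X) ∈ domE (cConj (indic A)) := by
  refine ne_top_of_le_ne_top EReal.zero_ne_top (iSup_le fun x => ?_)
  rw [cpl_of_snd_eq_zero x 0 one_pos]
  unfold indic
  split_ifs <;> simp

def dualObjective (f g : X → EReal) (A : Set X) (z : W X) : EReal :=
  ⨅ w ∈ domE (cConj g), dualExpr f g A z w

lemma dualObjective_le_of_le (f g : X → EReal) (A : Set X) (a b : X →L[ℝ] ℝ) {α β : ℝ}
    (hαβ : α ≤ β) : dualObjective f g A (a, b, α) ≤ dualObjective f g A (a, b, β) :=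
  iInf₂_mono fun _ _ => EReal.sub_le_sub
    (EReal.sub_le_sub le_rfl (cConj_le_cConj_of_le f _ _ hαβ)) (cConj_le_cConj_of_le _ a b hαβ)

section

variable {f g : X → EReal} {A : Set X}

lemma mem_image_sub_epiW_iff (hf : (domE f).Nonempty) (hg : (domE g).Nonempty)
    (hA : A.Nonempty) {z w : W X} (hz : z ∈ domE (cConj (indic A))) (hw : w ∈ domE (cConj g))
    {p : W X × ℝ} (hp : p ∈ Bset X) :
    p ∈ (fun q : W X × ℝ =>
        q - ((w.1, 0, 0), (cConj g w).toReal - (cConj (indic A) z).toReal)) ''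
      epiW (cConj (fun x => dcSub (f x) (cpl x (-z.1, -z.2.1, z.2.2)))) ↔
      ((-p.2 : ℝ) : EReal) ≤ dualExpr f g A z w := by
  obtain ⟨⟨a, b, α⟩, r⟩ := p
  obtain ⟨rfl, rfl, hα⟩ := hp
  simp only [Set.mem_image, sub_eq_iff_eq_add, exists_eq_right, epiW, Set.mem_ofPred_eq,
    Prod.mk_add_mk, zero_add, add_zero]
  rw [cConj_dcSub_cpl_neg f z w.1 hα, le_coe_add_sub_iff (cConj_ne_bot_s13 hf _),
    coe_toReal_cConj hg hw, coe_toReal_cConj (by rwa [domE_indic]) hz]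
  rfl

lemma mem_OmegaSet_iff_of_mem_Bset (hf : (domE f).Nonempty) (hg : (domE g).Nonempty)
    (hA : A.Nonempty) {p : W X × ℝ} (hp : p ∈ Bset X) :
    p ∈ OmegaSet f g A ↔
      ∃ z ∈ domE (cConj (indic A)), ((-p.2 : ℝ) : EReal) ≤ dualObjective f g A z := by
  simp only [OmegaSet, Set.mem_iUnion, Set.mem_iInter, exists_prop, dualObjective, le_iInf₂_iff]
  exact exists_congr fun z => and_congr_right fun hz =>
    forall₂_congr fun w hw => mem_image_sub_epiW_iff hf hg hA hz hw hp

lemma OmegaSet_inter_Bset_subset_iff (hf : (domE f).Nonempty) (hg : (domE g).Nonempty)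
    (hA : A.Nonempty) :
    OmegaSet f g A ∩ Bset X ⊆ epiW (cConj (fun x => dcSub (f x) (g x) + indic A x)) ∩ Bset X ↔
      ∀ z ∈ domE (cConj (indic A)), dualObjective f g A z ≤ vP f g A := by
  have hB : ∀ r : ℝ, (((0, 0, 1) : W X), r) ∈ Bset X := fun _ => ⟨rfl, rfl, one_pos⟩
  constructor
  · intro hsub z hz
    refine EReal.le_of_forall_coe_le_imp_coe_le fun r hr => ?_
    have hΩ := (mem_OmegaSet_iff_of_mem_Bset hf hg hA (hB (-r))).2 ⟨z, hz, by rwa [neg_neg]⟩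
    simpa only [neg_neg, vP] using
      (mem_epiW_cConj_iff_of_mem_Bset _ (hB (-r))).1 (hsub ⟨hΩ, hB (-r)⟩).1
  · rintro h p ⟨hpΩ, hpB⟩
    obtain ⟨z, hz, hle⟩ := (mem_OmegaSet_iff_of_mem_Bset hf hg hA hpB).1 hpΩ
    exact ⟨(mem_epiW_cConj_iff_of_mem_Bset _ hpB).2 (hle.trans (h z hz)), hpB⟩

lemma dualObjective_le_of_forall_mem_domE {v : EReal}
    (h : ∀ z ∈ domE (cConj (indic A)), dualObjective f g A z ≤ v) (z : W X) :
    dualObjective f g A z ≤ v := by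
  by_cases hz : z ∈ domE (cConj (indic A))
  · exact h z hz
  rcases (domE (cConj g)).eq_empty_or_nonempty with hE | ⟨w, hw⟩
  · simpa [dualObjective, hE] using h _ (zero_zero_one_mem_domE_cConj_indic A)
  · refine (iInf₂_le w hw).trans ?_
    rw [dualExpr, not_not.1 hz, EReal.sub_top]
    exact bot_le

lemma forall_Zset_dualObjective_le_iff {v : EReal} :
    (∀ z ∈ Zset X, dualObjective f g A z ≤ v) ↔
      ∀ z ∈ domE (cConj (indic A)), dualObjective f g A z ≤ v :=
  ⟨fun h z _ => (dualObjective_le_of_le f g A z.1 z.2.1 (le_max_left z.2.2 1)).trans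
      (h (z.1, z.2.1, max z.2.2 1) (one_pos.trans_le (le_max_right z.2.2 1))),
    fun h z _ => dualObjective_le_of_forall_mem_domE h z⟩

end

theorem prop41_i_general
    {X : Type*} [AddCommGroup X] [Module ℝ X] [TopologicalSpace X]
    (f g : X → EReal) (A : Set X) (hA : A.Nonempty)
    (hf : ProperFn f) (hg : ProperFn g) :
    vDF f g A ≤ vP f g A ↔
      OmegaSet f g A ∩ Bset X ⊆
        epiW (cConj (fun x => dcSub (f x) (g x) + indic A x)) ∩ Bset X := by
  rw [OmegaSet_inter_Bset_subset_iff hf.2 hg.2 hA, ← forall_Zset_dualObjective_le_iff]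
  exact iSup₂_le_iff

/-- Proposition 4.1(i): weak duality `v(P) ≥ v(D^F)` holds iff
`Ω ∩ B ⊆ epi (f−g+δ_A)^c ∩ B`. -/
theorem prop41_i
    {X : Type*} [AddCommGroup X] [Module ℝ X] [TopologicalSpace X]
    (f g : X → EReal) (A : Set X) (hA : A.Nonempty)
    (hf : ProperFn f) (hfc : ConvexFn f) (hg : ProperFn g) (hgc : ConvexFn g)
    (hdom : domE f ⊆ domE g) :
    vDF f g A ≤ vP f g A ↔
      OmegaSet f g A ∩ Bset X ⊆
        epiW (cConj (fun x => dcSub (f x) (g x) + indic A x)) ∩ Bset X :=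
  prop41_i_general f g A hA hf hg

end
end
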